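/- Let S and S' be finite multisets of examples in ℝ^d × {0,1} and let Δ*(S,S') = Δ(S,S')/max(|S|,|S'|) be their relative edit distance. Then for every feature j and threshold t, |G(S,j,t) − G(S',j,t)| ≤ 12.5 · Δ*(S,S'). -/

import Mathlib

open Classical in
/-- The Gini index of a multiset of binary-labeled examples:
`2 p (1-p)` where `p` is the fraction of `true` labels; `0` for the empty multiset. -/
noncomputable def gini {α : Type*} (S : Multiset (α × Bool)) : ℝ :=
  if S = 0 then 0 else
    let p : ℝ := ((S.filter fun e => e.2 = true).card : ℝ) / S.card
    2 * p * (1 - p)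

open Classical in
/-- The Gini gain of the split (j, t) on the multiset S of examples in ℝ^d × {0,1}:
G(S,j,t) = g(S) − (|S₋|/|S|) g(S₋) − (|S₊|/|S|) g(S₊) where S₋ = S[x_j ≤ t] and
S₊ = S[x_j > t]; by convention G(∅,j,t) = 0. -/
noncomputable def giniGain {d : ℕ} (S : Multiset ((Fin d → ℝ) × Bool)) (j : Fin d) (t : ℝ) : ℝ :=
  if S = 0 then 0 else
    gini S
      - (((S.filter fun e : (Fin d → ℝ) × Bool => e.1 j ≤ t).card : ℝ) / S.card) * gini (S.filter fun e : (Fin d → ℝ) × Bool => e.1 j ≤ t)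
      - (((S.filter fun e : (Fin d → ℝ) × Bool => t < e.1 j).card : ℝ) / S.card) * gini (S.filter fun e : (Fin d → ℝ) × Bool => t < e.1 j)

/-- `EditPath n S S'` holds iff `S'` can be obtained from `S` by a sequence of `n`
single-element insertions and deletions. -/
def EditPath {α : Type*} : ℕ → Multiset α → Multiset α → Prop
  | 0, S, S' => S = S'
  | n + 1, S, S' => ∃ T : Multiset α, ((∃ a, T = a ::ₘ S) ∨ (∃ a, S = a ::ₘ T)) ∧ EditPath n T S'

/-- The edit distance between two multisets: the minimum number of single-element
insertions and deletions transforming one into the other. -/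
noncomputable def editDist {α : Type*} (S S' : Multiset α) : ℕ :=
  sInf {n | EditPath n S S'}

/-!
Write `m(T) = |T| · g(T)`, so that `|S| · G(S) = m(S) − m(S₋) − m(S₊)`. As a function of the
number `k` of positive labels, `m(T) = 2k(|T| − k)/|T|`, and adding one example to `T` raises
`m(T)` by between `0` and `2`. Adding an example to `S` adds it to `S` and to exactly one of
`S₋`, `S₊`, so `|S| · G(S)` moves by at most `2`; renormalising by `|S| + 1` instead of `|S|`
costs a further `|G(S)| ≤ 1/2`, so one insertion or deletion changes `G` by at most
`(5/2) / (|S| + 1)`. If `Δ ≤ M/2` for `M = max(|S|, |S'|)`, every multiset on a shortest edit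
path from the larger side has more than `M/2` elements, which gives `|G(S) − G(S')| ≤ 5Δ/M`;
if `Δ > M/2`, the bound `12.5 Δ/M` exceeds `1 ≥ |G(S) − G(S')|`.
-/

/-- `n · 2p(1 − p)` for `p = k / n`: the Gini index of `n` labels, `k` of them positive,
weighted by `n`. -/
noncomputable def giniMass (k n : ℝ) : ℝ := 2 * k * (n - k) / n

lemma giniMass_sub_left (k n : ℝ) : giniMass (n - k) n = giniMass k n := by
  unfold giniMass; ring_nf

lemma giniMass_succ_succ_sub_mem {k n : ℝ} (hk : 0 ≤ k) (hkn : k ≤ n) :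
    giniMass (k + 1) (n + 1) - giniMass k n ∈ Set.Icc 0 2 := by
  rcases hkn.lt_or_eq with hkn | rfl
  · have hn : 0 < n := hk.trans_lt hkn
    have h : giniMass (k + 1) (n + 1) - giniMass k n = 2 * (n - k) ^ 2 / (n * (n + 1)) := by
      unfold giniMass; field_simp; ring
    rw [h]
    refine ⟨by positivity, (div_le_iff₀ (by positivity)).2 ?_⟩
    nlinarith
  · simp [giniMass]

lemma giniMass_succ_sub_mem {k n : ℝ} (hk : 0 ≤ k) (hkn : k ≤ n) :
    giniMass k (n + 1) - giniMass k n ∈ Set.Icc 0 2 := by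
  have h := giniMass_succ_succ_sub_mem (sub_nonneg.2 hkn) (sub_le_self n hk)
  rwa [giniMass_sub_left, show n - k + 1 = n + 1 - k by ring, giniMass_sub_left] at h

lemma card_mul_gini {α : Type*} (S : Multiset (α × Bool)) :
    S.card * gini S = giniMass (S.filter fun e => e.2 = true).card S.card := by
  unfold gini giniMass
  split_ifs with h
  · simp [h]
  · have : (S.card : ℝ) ≠ 0 := by simpa using h
    field_simp

lemma gini_mem_Icc {α : Type*} (S : Multiset (α × Bool)) : gini S ∈ Set.Icc 0 (1 / 2) := by
  unfold gini
  split_ifs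
  · norm_num
  · set p : ℝ := ((S.filter fun e => e.2 = true).card : ℝ) / S.card
    have hp : p ∈ Set.Icc 0 1 := ⟨by positivity,
      div_le_one_of_le₀ (by exact_mod_cast Multiset.card_le_card (Multiset.filter_le _ _))
        (Nat.cast_nonneg _)⟩
    constructor <;> nlinarith [hp.1, hp.2, sq_nonneg (2 * p - 1)]

lemma card_mul_gini_cons_sub_mem {α : Type*} (e : α × Bool) (S : Multiset (α × Bool)) :
    ((e ::ₘ S).card * gini (e ::ₘ S) - S.card * gini S : ℝ) ∈ Set.Icc 0 2 := by
  have hk : ((S.filter fun e => e.2 = true).card : ℝ) ≤ S.card := by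
    exact_mod_cast Multiset.card_le_card (Multiset.filter_le _ _)
  rw [card_mul_gini, card_mul_gini, Multiset.card_cons, Multiset.filter_cons]
  split_ifs
  · simpa using giniMass_succ_succ_sub_mem (Nat.cast_nonneg _) hk
  · simpa using giniMass_succ_sub_mem (Nat.cast_nonneg _) hk

section giniGain

variable {d : ℕ} (j : Fin d) (t : ℝ)

lemma card_mul_giniGain (S : Multiset ((Fin d → ℝ) × Bool)) :
    S.card * giniGain S j t =
      S.card * gini S
        - (S.filter fun e : (Fin d → ℝ) × Bool => e.1 j ≤ t).card
          * gini (S.filter fun e : (Fin d → ℝ) × Bool => e.1 j ≤ t)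
        - (S.filter fun e : (Fin d → ℝ) × Bool => t < e.1 j).card
          * gini (S.filter fun e : (Fin d → ℝ) × Bool => t < e.1 j) := by
  unfold giniGain
  split_ifs with h
  · simp [h, gini]
  · have : (S.card : ℝ) ≠ 0 := by simpa using h
    field_simp

lemma card_filter_le_add_card_filter_lt (S : Multiset ((Fin d → ℝ) × Bool)) :
    (S.filter fun e : (Fin d → ℝ) × Bool => e.1 j ≤ t).card
      + (S.filter fun e : (Fin d → ℝ) × Bool => t < e.1 j).card = S.card := by
  rw [← Multiset.card_add]
  simp_rw [← not_le]
  rw [Multiset.filter_add_not]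

lemma abs_giniGain_le_half (S : Multiset ((Fin d → ℝ) × Bool)) :
    |giniGain S j t| ≤ 1 / 2 := by
  unfold giniGain
  split_ifs with h
  · norm_num
  have hn : (S.card : ℝ) ≠ 0 := by simpa using h
  have hw : ((S.filter fun e : (Fin d → ℝ) × Bool => e.1 j ≤ t).card : ℝ) / S.card
      + (S.filter fun e : (Fin d → ℝ) × Bool => t < e.1 j).card / S.card = 1 := by
    rw [← add_div, div_eq_one_iff_eq hn]
    exact_mod_cast card_filter_le_add_card_filter_lt j t S
  have hS := gini_mem_Icc S
  have hL := gini_mem_Icc (S.filter fun e : (Fin d → ℝ) × Bool => e.1 j ≤ t)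
  have hR := gini_mem_Icc (S.filter fun e : (Fin d → ℝ) × Bool => t < e.1 j)
  have hwL : (0 : ℝ) ≤
      (S.filter fun e : (Fin d → ℝ) × Bool => e.1 j ≤ t).card / S.card := by positivity
  have hwR : (0 : ℝ) ≤
      (S.filter fun e : (Fin d → ℝ) × Bool => t < e.1 j).card / S.card := by positivity
  rw [abs_le]
  constructor <;> nlinarith [hS.1, hS.2, hL.1, hL.2, hR.1, hR.2]

lemma abs_card_mul_giniGain_cons_sub_le (e : (Fin d → ℝ) × Bool)
    (S : Multiset ((Fin d → ℝ) × Bool)) :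
    |((e ::ₘ S).card * giniGain (e ::ₘ S) j t - S.card * giniGain S j t : ℝ)| ≤ 2 := by
  have hS := card_mul_gini_cons_sub_mem e S
  have hL := card_mul_gini_cons_sub_mem e (S.filter fun e : (Fin d → ℝ) × Bool => e.1 j ≤ t)
  have hR := card_mul_gini_cons_sub_mem e (S.filter fun e : (Fin d → ℝ) × Bool => t < e.1 j)
  rw [card_mul_giniGain, card_mul_giniGain, abs_le]
  by_cases h : e.1 j ≤ t
  · simp only [Multiset.filter_cons, h, not_lt.2 h, if_true, if_false, Multiset.singleton_add,
      zero_add]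
    constructor <;> linarith [hS.1, hS.2, hL.1, hL.2]
  · simp only [Multiset.filter_cons, h, not_le.1 h, if_true, if_false, Multiset.singleton_add,
      zero_add]
    constructor <;> linarith [hS.1, hS.2, hR.1, hR.2]

lemma abs_giniGain_cons_sub_le (e : (Fin d → ℝ) × Bool)
    (S : Multiset ((Fin d → ℝ) × Bool)) :
    |giniGain (e ::ₘ S) j t - giniGain S j t| ≤ (5 / 2) / (S.card + 1) := by
  have hn : (0 : ℝ) < S.card + 1 := by positivity
  have hN := abs_card_mul_giniGain_cons_sub_le j t e S
  rw [Multiset.card_cons, Nat.cast_succ] at hN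
  have h : giniGain (e ::ₘ S) j t - giniGain S j t =
      ((S.card + 1) * giniGain (e ::ₘ S) j t - S.card * giniGain S j t - giniGain S j t)
        / (S.card + 1) := by
    field_simp; ring
  rw [h, abs_div, abs_of_pos hn]
  gcongr
  calc _ ≤ |(S.card + 1) * giniGain (e ::ₘ S) j t - S.card * giniGain S j t|
        + |giniGain S j t| := abs_sub _ _
    _ ≤ 2 + 1 / 2 := add_le_add hN (abs_giniGain_le_half j t S)
    _ = 5 / 2 := by norm_num

end giniGain

namespace EditPath

variable {α : Type*}

theorem trans : ∀ {m n : ℕ} {S T U : Multiset α},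
    EditPath m S T → EditPath n T U → EditPath (m + n) S U
  | 0, _, _, _, _, rfl, h' => by rwa [Nat.zero_add]
  | _ + 1, _, _, _, _, ⟨V, hstep, h⟩, h' => by
    rw [Nat.add_right_comm]
    exact ⟨V, hstep, trans h h'⟩

theorem symm : ∀ {n : ℕ} {S T : Multiset α}, EditPath n S T → EditPath n T S
  | 0, _, _, rfl => rfl
  | _ + 1, S, _, ⟨V, hstep, h⟩ => (symm h).trans (⟨S, hstep.symm, rfl⟩ : EditPath 1 V S)

theorem card_zero (S : Multiset α) : EditPath S.card S 0 := by
  induction S using Multiset.induction with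
  | empty => rfl
  | cons a S ih =>
    rw [Multiset.card_cons]
    exact ⟨S, Or.inr ⟨a, rfl⟩, ih⟩

theorem abs_sub_le_mul_div {f : Multiset α → ℝ} {c : ℝ} (hc : 0 ≤ c)
    (hf : ∀ a T, |f (a ::ₘ T) - f T| ≤ c / (T.card + 1)) :
    ∀ {n K : ℕ} {S S' : Multiset α}, EditPath n S S' → 0 < K → K + n ≤ S.card + 1 →
      |f S - f S'| ≤ c * n / K
  | 0, _, _, _, rfl, _, _ => by simp
  | n + 1, K, S, S', ⟨T, hstep, h⟩, hK, hKS => by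
    have hc_div {m : ℕ} (hm : K ≤ m + 1) : c / (m + 1) ≤ c / K :=
      div_le_div_of_nonneg_left hc (by exact_mod_cast hK) (by exact_mod_cast hm)
    obtain ⟨hfirst, hKT⟩ : |f S - f T| ≤ c / K ∧ K + n ≤ T.card + 1 := by
      rcases hstep with ⟨a, rfl⟩ | ⟨a, rfl⟩
      · rw [abs_sub_comm, Multiset.card_cons]
        exact ⟨(hf a S).trans (hc_div (by omega)), by omega⟩
      · rw [Multiset.card_cons] at hKS
        exact ⟨(hf a T).trans (hc_div (by omega)), by omega⟩
    calc |f S - f S'| ≤ |f S - f T| + |f T - f S'| := abs_sub_le _ _ _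
      _ ≤ c / K + c * n / K := add_le_add hfirst (abs_sub_le_mul_div hc hf h hK hKT)
      _ = c * ↑(n + 1) / K := by push_cast; ring

end EditPath

section editDist

variable {α : Type*}

theorem editPath_editDist (S S' : Multiset α) : EditPath (editDist S S') S S' :=
  Nat.sInf_mem (s := {n | EditPath n S S'})
    ⟨_, (EditPath.card_zero S).trans (EditPath.card_zero S').symm⟩

theorem editDist_comm (S S' : Multiset α) : editDist S S' = editDist S' S :=
  le_antisymm (Nat.sInf_le (editPath_editDist S' S).symm)
    (Nat.sInf_le (editPath_editDist S S').symm)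

end editDist

/-- |G(S,j,t) − G(S',j,t)| ≤ 12.5 · Δ*(S,S'), where
Δ*(S,S') = Δ(S,S')/max(|S|,|S'|) is the relative edit distance. -/
theorem giniGain_smooth_rel_edit {d : ℕ} (S S' : Multiset ((Fin d → ℝ) × Bool))
    (j : Fin d) (t : ℝ) :
    |giniGain S j t - giniGain S' j t| ≤
      12.5 * ((editDist S S' : ℝ) / (max S.card S'.card : ℝ)) := by
  wlog hcard : S'.card ≤ S.card generalizing S S'
  · rw [abs_sub_comm, editDist_comm, max_comm]
    exact this S' S (le_of_not_ge hcard)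
  rw [max_eq_left (by exact_mod_cast hcard)]
  rcases Nat.eq_zero_or_pos S.card with hS | hS
  · obtain rfl : S = 0 := Multiset.card_eq_zero.1 hS
    obtain rfl : S' = 0 := Multiset.card_eq_zero.1 (by omega)
    simp
  set D := editDist S S'
  have hM : (0 : ℝ) < S.card := by exact_mod_cast hS
  rcases le_or_gt (2 * D) S.card with hD | hD
  · -- along a shortest edit path every multiset has more than `|S| / 2` elements
    have hD' : 2 * (D : ℝ) ≤ S.card := by exact_mod_cast hD
    have hK : (S.card : ℝ) / 2 ≤ ↑(S.card + 1 - D) := by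
      rw [Nat.cast_sub (by omega)]; push_cast
      linarith
    calc |giniGain S j t - giniGain S' j t| ≤ 5 / 2 * D / ↑(S.card + 1 - D) :=
          EditPath.abs_sub_le_mul_div (f := fun S => giniGain S j t) (c := 5 / 2)
            (K := S.card + 1 - D) (by norm_num) (abs_giniGain_cons_sub_le j t)
            (editPath_editDist S S') (by omega) (by omega)
      _ ≤ 5 / 2 * D / (S.card / 2) := by gcongr
      _ = 5 * (D / S.card) := by field_simp
      _ ≤ 12.5 * (D / S.card) := by gcongr; norm_num
  · have hD : (S.card : ℝ) < 2 * D := by exact_mod_cast hD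
    calc |giniGain S j t - giniGain S' j t| ≤ |giniGain S j t| + |giniGain S' j t| := abs_sub _ _
      _ ≤ 1 / 2 + 1 / 2 := add_le_add (abs_giniGain_le_half j t S) (abs_giniGain_le_half j t S')
      _ ≤ 12.5 * (D / S.card) := by
          rw [mul_div_assoc', le_div_iff₀ hM]; linarith
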